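/- arXiv:1710.02335 — 8 statements merged into one kernel-verified Lean document; each statement's English description precedes it below -/
import Mathlib

section
/- Let D ∈ GLₙ(ℤ) and let λ₁, …, λₙ be the complex eigenvalues of D (the roots of its characteristic polynomial, counted with multiplicity). Then there exist non-negative integers a, b and complex numbers μ₁, …, μ_a, ν₁, …, ν_b such that for every positive integer k, ( ∏_{i=1}^{n} |1 − λᵢᵏ| + ∏_{i=1}^{n} |1 + λᵢᵏ| )/2 = μ₁ᵏ + ⋯ + μ_aᵏ − ν₁ᵏ − ⋯ − ν_bᵏ. -/
/-!
The multiset of eigenvalues is closed under complex conjugation, because the characteristic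
polynomial has integer coefficients. On a conjugate pair of non-real eigenvalues
`(1 ± z^k)(1 ± z̄^k) = |1 ± z^k|²`, so only the real eigenvalues produce signs, and for real `x`
one has `|1 + x^k| = (-1)^(ak) (1 + x^k)` and `|1 - x^k| = (-1)^(ak+b) (1 - x^k)` with `a, b`
independent of `k`. Hence `∏|1 + λᵢ^k| = (-1)^(ak) ∏(1 + λᵢ^k)` and
`∏|1 - λᵢ^k| = (-1)^(ak+b) ∏(1 - λᵢ^k)` for suitable `a, b`. Expanding both products over subsets
`S`, the average of the two is `∑ ((-1)^a λ_S)^k` over the `S` with `b + |S|` even, where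
`λ_S = ∏_{i ∈ S} λᵢ`.
-/

open Polynomial ComplexConjugate

namespace Real

theorem exists_abs_one_add_pow_eq (x : ℝ) :
    ∃ a b : ℕ, ∀ k : ℕ,
      |1 + x ^ k| = (-1) ^ (a * k) * (1 + x ^ k) ∧
        |1 - x ^ k| = (-1) ^ (a * k + b) * (1 - x ^ k) := by
  rcases lt_or_ge x (-1) with hx | hx
  · refine ⟨1, 1, fun k => ?_⟩
    have hpow : x ^ k = (-1) ^ k * (-x) ^ k := by rw [← mul_pow]; ring
    have hbig : 1 ≤ (-x) ^ k := one_le_pow₀ (by linarith)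
    rw [one_mul, pow_succ, hpow]
    rcases neg_one_pow_eq_or ℝ k with he | he <;> rw [he] <;>
      constructor <;> first
        | rw [abs_of_nonneg (by linarith)]; ring
        | rw [abs_of_nonpos (by linarith)]; ring
  rcases lt_or_ge 1 x with hx' | hx'
  · refine ⟨0, 1, fun k => ?_⟩
    have hbig : 1 ≤ x ^ k := one_le_pow₀ hx'.le
    constructor
    · rw [abs_of_nonneg (by linarith)]; ring
    · rw [abs_of_nonpos (by linarith)]; ring
  · refine ⟨0, 0, fun k => ?_⟩
    have hsmall : |x ^ k| ≤ 1 := by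
      rw [abs_pow]; exact pow_le_one₀ (abs_nonneg x) (abs_le.mpr ⟨hx, hx'⟩)
    obtain ⟨h₁, h₂⟩ := abs_le.mp hsmall
    constructor
    · rw [abs_of_nonneg (by linarith)]; ring
    · rw [abs_of_nonneg (by linarith)]; ring

end Real

namespace Complex

theorem exists_norm_one_add_pow_eq {z : ℂ} (hz : z.im = 0) :
    ∃ a b : ℕ, ∀ k : ℕ,
      (‖1 + z ^ k‖ : ℂ) = (-1) ^ (a * k) * (1 + z ^ k) ∧
        (‖1 - z ^ k‖ : ℂ) = (-1) ^ (a * k + b) * (1 - z ^ k) := by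
  obtain ⟨a, b, h⟩ := Real.exists_abs_one_add_pow_eq z.re
  refine ⟨a, b, fun k => ?_⟩
  obtain ⟨h₁, h₂⟩ := h k
  rw [← re_add_im z, hz, ofReal_zero, zero_mul, add_zero]
  constructor
  · rw [← ofReal_pow, ← ofReal_one, ← ofReal_add, norm_real, Real.norm_eq_abs, h₁]
    push_cast; ring
  · rw [← ofReal_pow, ← ofReal_one, ← ofReal_sub, norm_real, Real.norm_eq_abs, h₂]
    push_cast; ring

end Complex

namespace Multiset

theorem exists_prod_norm_one_add_pow_eq_of_im_eq_zero {R : Multiset ℂ}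
    (hR : ∀ z ∈ R, z.im = 0) :
    ∃ a b : ℕ, ∀ k : ℕ,
      (R.map fun z => (‖1 + z ^ k‖ : ℂ)).prod = (-1) ^ (a * k) * (R.map fun z => 1 + z ^ k).prod ∧
        (R.map fun z => (‖1 - z ^ k‖ : ℂ)).prod
          = (-1) ^ (a * k + b) * (R.map fun z => 1 - z ^ k).prod := by
  induction R using Multiset.induction_on with
  | empty => exact ⟨0, 0, fun k => by simp⟩
  | cons z R ih =>
    obtain ⟨a, b, hz⟩ := Complex.exists_norm_one_add_pow_eq (hR z (mem_cons_self z R))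
    obtain ⟨a', b', hR'⟩ := ih fun w hw => hR w (mem_cons_of_mem hw)
    refine ⟨a + a', b + b', fun k => ?_⟩
    obtain ⟨hz₁, hz₂⟩ := hz k
    obtain ⟨hR₁, hR₂⟩ := hR' k
    simp only [map_cons, prod_cons, hz₁, hz₂, hR₁, hR₂]
    constructor <;> ring

theorem prod_map_ofReal_norm (U : Multiset ℂ) (f : ℂ → ℂ) :
    (U.map fun z => (‖f z‖ : ℂ)).prod = ‖(U.map f).prod‖ := by
  induction U using Multiset.induction_on <;> simp [*]

theorem prod_map_norm_mul_prod_map_conj (U : Multiset ℂ) {f : ℂ → ℂ}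
    (hf : ∀ z, f (conj z) = conj (f z)) :
    (U.map fun z => (‖f z‖ : ℂ)).prod * ((U.map conj).map fun z => (‖f z‖ : ℂ)).prod
      = (U.map f).prod * ((U.map conj).map f).prod := by
  simp only [map_map, Function.comp_def, hf, Complex.norm_conj,
    prod_hom', prod_map_ofReal_norm, Complex.mul_conj']
  ring

theorem eq_filter_im_eq_zero_add_of_map_conj {M : Multiset ℂ} (hM : M.map conj = M) :
    M = M.filter (·.im = 0) + (M.filter (0 < ·.im) + (M.filter (0 < ·.im)).map conj) := by
  have hlower : M.filter (·.im < 0) = (M.filter (0 < ·.im)).map conj := by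
    conv_lhs => rw [← hM]
    rw [filter_map]
    simp
  have hnonreal : M.filter (0 < ·.im) + M.filter (·.im < 0) = M.filter (¬ ·.im = 0) := by
    have hempty : M.filter (fun z => 0 < z.im ∧ z.im < 0) = 0 :=
      filter_eq_nil.mpr fun z _ h => lt_asymm h.1 h.2
    rw [filter_add_filter, hempty, add_zero]
    exact filter_congr fun z _ => by rw [← ne_eq, ne_iff_lt_or_gt, or_comm]
  rw [← hlower, hnonreal, filter_add_not]

theorem exists_prod_norm_one_add_pow_eq_of_map_conj {M : Multiset ℂ} (hM : M.map conj = M) :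
    ∃ a b : ℕ, ∀ k : ℕ,
      (M.map fun z => (‖1 + z ^ k‖ : ℂ)).prod = (-1) ^ (a * k) * (M.map fun z => 1 + z ^ k).prod ∧
        (M.map fun z => (‖1 - z ^ k‖ : ℂ)).prod
          = (-1) ^ (a * k + b) * (M.map fun z => 1 - z ^ k).prod := by
  obtain ⟨a, b, hreal⟩ :=
    exists_prod_norm_one_add_pow_eq_of_im_eq_zero (R := M.filter (·.im = 0))
      fun z hz => (mem_filter.mp hz).2
  refine ⟨a, b, fun k => ?_⟩
  obtain ⟨h₁, h₂⟩ := hreal k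
  rw [eq_filter_im_eq_zero_add_of_map_conj hM]
  simp only [Multiset.map_add, prod_add]
  rw [prod_map_norm_mul_prod_map_conj _ fun z => by simp,
    prod_map_norm_mul_prod_map_conj _ fun z => by simp, h₁, h₂]
  constructor <;> ring

end Multiset

theorem Polynomial.roots_map_intCast_map_conj (p : ℤ[X]) :
    (p.map (Int.castRingHom ℂ)).roots.map conj = (p.map (Int.castRingHom ℂ)).roots := by
  rw [← (IsAlgClosed.splits _).roots_map, Polynomial.map_map,
    RingHom.ext_int ((starRingEnd ℂ).comp (Int.castRingHom ℂ)) (Int.castRingHom ℂ)]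

theorem Finset.prod_one_sub_pow_eq_sum {ι R : Type*} [CommRing R] (s : Finset ι) (f : ι → R)
    (k : ℕ) :
    ∏ i ∈ s, (1 - f i ^ k) = ∑ t ∈ s.powerset, (-1) ^ t.card * (∏ i ∈ t, f i) ^ k := by
  simp only [sub_eq_add_neg, prod_one_add, prod_neg, prod_pow]

theorem Finset.prod_one_add_pow_eq_sum {ι R : Type*} [CommSemiring R] (s : Finset ι)
    (f : ι → R) (k : ℕ) :
    ∏ i ∈ s, (1 + f i ^ k) = ∑ t ∈ s.powerset, (∏ i ∈ t, f i) ^ k := by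
  simp only [prod_one_add, prod_pow]

open Finset in
theorem exists_half_prod_norm_eq_sum_pow {ι : Type*} [Fintype ι] (lam : ι → ℂ)
    (hlam : (univ.val.map lam).map conj = univ.val.map lam) :
    ∃ w : Finset ι → ℂ, ∀ k : ℕ, 0 < k →
      ((((∏ i, ‖1 - lam i ^ k‖) + ∏ i, ‖1 + lam i ^ k‖) / 2 : ℝ) : ℂ) = ∑ S, w S ^ k := by
  obtain ⟨a, b, h⟩ := Multiset.exists_prod_norm_one_add_pow_eq_of_map_conj hlam
  refine ⟨fun S => if Even (b + S.card) then (-1) ^ a * ∏ i ∈ S, lam i else 0, fun k hk => ?_⟩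
  obtain ⟨h₁, h₂⟩ := h k
  simp only [Multiset.map_map, Function.comp_def, prod_map_val] at h₁ h₂
  push_cast
  rw [h₁, h₂, prod_one_sub_pow_eq_sum, prod_one_add_pow_eq_sum, powerset_univ, mul_sum, mul_sum,
    ← sum_add_distrib, sum_div]
  refine sum_congr rfl fun S _ => ?_
  split_ifs with hS
  · have hsign : (-1 : ℂ) ^ b * (-1) ^ S.card = 1 := by rw [← pow_add, hS.neg_one_pow]
    linear_combination (-1) ^ (a * k) * (∏ i ∈ S, lam i) ^ k / 2 * hsign
  · have hsign : (-1 : ℂ) ^ b * (-1) ^ S.card = -1 := by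
      rw [← pow_add, (Nat.not_even_iff_odd.mp hS).neg_one_pow]
    rw [zero_pow hk.ne']
    linear_combination (-1) ^ (a * k) * (∏ i ∈ S, lam i) ^ k / 2 * hsign

theorem stmt1_general (n : ℕ) (D : Matrix (Fin n) (Fin n) ℤ)
    (lam : Fin n → ℂ)
    (hlam : (D.charpoly).map (Int.castRingHom ℂ) = ∏ i, (X - C (lam i))) :
    ∃ (a b : ℕ) (μ : Fin a → ℂ) (ν : Fin b → ℂ),
      ∀ k : ℕ, 0 < k →
        ((((∏ i, ‖1 - lam i ^ k‖) + ∏ i, ‖1 + lam i ^ k‖) / 2 : ℝ) : ℂ)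
          = (∑ i, μ i ^ k) - ∑ i, ν i ^ k := by
  have hroots : (D.charpoly.map (Int.castRingHom ℂ)).roots = Finset.univ.val.map lam := by
    rw [hlam, ← roots_multiset_prod_X_sub_C (Finset.univ.val.map lam), Multiset.map_map]
    rfl
  have hconj := D.charpoly.roots_map_intCast_map_conj
  rw [hroots] at hconj
  obtain ⟨w, hw⟩ := exists_half_prod_norm_eq_sum_pow lam hconj
  let e := Fintype.equivFin (Finset (Fin n))
  refine ⟨_, 0, w ∘ e.symm, finZeroElim, fun k hk => ?_⟩
  rw [hw k hk, Fin.sum_univ_zero, sub_zero]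
  exact (e.symm.sum_comp fun S => w S ^ k).symm

/-- if `λ₁, …, λₙ` are the complex eigenvalues of `D ∈ GLₙ(ℤ)` (the roots of
its characteristic polynomial, with multiplicity), then there are complex numbers
`μ₁, …, μ_a, ν₁, …, ν_b` with
`(∏|1-λᵢᵏ| + ∏|1+λᵢᵏ|)/2 = μ₁ᵏ + ⋯ + μ_aᵏ - ν₁ᵏ - ⋯ - ν_bᵏ` for all `k ≥ 1`. -/
theorem stmt1 (n : ℕ) (D : Matrix (Fin n) (Fin n) ℤ) (hD : IsUnit D)
    (lam : Fin n → ℂ)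
    (hlam : (D.charpoly).map (Int.castRingHom ℂ) = ∏ i, (X - C (lam i))) :
    ∃ (a b : ℕ) (μ : Fin a → ℂ) (ν : Fin b → ℂ),
      ∀ k : ℕ, 0 < k →
        ((((∏ i, ‖1 - lam i ^ k‖) + ∏ i, ‖1 + lam i ^ k‖) / 2 : ℝ) : ℂ)
          = (∑ i, μ i ^ k) - ∑ i, ν i ^ k :=
  stmt1_general n D lam hlam
end

section
/- Let D ∈ GLₙ(ℤ) and let λ₁, …, λₙ be the complex eigenvalues of D (with multiplicity). Then there exist non-negative integers a, b and complex numbers μ₁, …, μ_a, ν₁, …, ν_b such that for all complex z in a disk of positive radius around 0, the series ∑_{k=1}^{∞} [( ∏_{i=1}^{n} |1 − λᵢᵏ| + ∏_{i=1}^{n} |1 + λᵢᵏ| )/2] · zᵏ/k converges and exp of its sum equals ∏_{i=1}^{b}(1 − νᵢ z) / ∏_{i=1}^{a}(1 − μᵢ z); in particular this function is rational. -/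
/-!
Non-real eigenvalues come in conjugate pairs, so `∏ |1 ∓ λᵢᵏ| = ε∓(k) ∏ (1 ∓ λᵢᵏ)` with a sign
determined by the real eigenvalues outside `[-1, 1]`: if there are `m` of them, `q` of which lie
below `-1`, then `ε₋(k) = (-1)^m (-1)^(qk)` and `ε₊(k) = (-1)^(qk)`. Expanding both products over
subsets `t` of the eigenvalues turns the `k`-th coefficient into the power sum `∑ μₜᵏ` over the
subsets with `m + |t|` even, where `μₜ = (-1)^q ∏_{i ∈ t} λᵢ`. Finally
`exp (∑ₖ μᵏ zᵏ / k) = 1 / (1 - μ z)` for `|μ z| < 1`.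
-/

open Polynomial Complex ComplexConjugate ComplexOrder Finset

section ConjugationInvariant

variable {ι : Type*} [Fintype ι]

lemma map_conj_eq_of_map_ofReal_eq_prod {lam : ι → ℂ} {p : ℝ[X]}
    (h : p.map ofRealHom = ∏ i, (X - C (lam i))) :
    (univ.val.map lam).map conj = univ.val.map lam := by
  set M := univ.val.map lam
  have hM : (M.map fun a => X - C a).prod = p.map ofRealHom := by
    rw [h, Multiset.map_map]
    rfl
  calc M.map conj = ((M.map conj).map fun a => X - C a).prod.roots :=
        (roots_multiset_prod_X_sub_C _).symm
    _ = ((M.map fun a => X - C a).prod.map (starRingEnd ℂ)).roots := by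
        simp [Polynomial.map_multiset_prod, Multiset.map_map]
    _ = M := by
        rw [hM, Polynomial.map_map, show (starRingEnd ℂ).comp ofRealHom = ofRealHom from
          RingHom.ext conj_ofReal, ← hM, roots_multiset_prod_X_sub_C]

lemma Multiset.prod_map_nonneg_of_map_conj {M : Multiset ℂ} (hM : M.map conj = M) {f : ℂ → ℂ}
    (hf : ∀ z, f (conj z) = conj (f z)) (hreal : ∀ x : ℝ, 0 ≤ f x) : 0 ≤ (M.map f).prod := by
  set U := M.filter (fun z => 0 < z.im)
  have hlower : M.filter (fun z => z.im < 0) = U.map conj := by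
    conv_lhs => rw [← hM]
    simp [Multiset.filter_map, U]
  have hsplit : M = M.filter (fun z => z.im = 0) + U + M.filter (fun z => z.im < 0) := by
    ext z
    simp only [Multiset.count_add, Multiset.count_filter, U]
    rcases lt_trichotomy z.im 0 with h | h | h
    · simp [h, h.ne, h.not_gt]
    · simp [h]
    · simp [h, h.ne', h.not_gt]
  have hpair : ((U.map conj).map f).prod = conj (U.map f).prod := by
    simp [map_multiset_prod, Multiset.map_map, hf]
  rw [hsplit, Multiset.map_add, Multiset.map_add, Multiset.prod_add, Multiset.prod_add, hlower,
    hpair, mul_assoc, mul_conj]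
  refine mul_nonneg (Multiset.prod_nonneg ?_) (zero_le_real.mpr (normSq_nonneg _))
  simp only [Multiset.mem_map, Multiset.mem_filter]
  rintro _ ⟨z, ⟨-, hz⟩, rfl⟩
  rw [← conj_eq_iff_re.mp (conj_eq_iff_im.mpr hz)]
  exact hreal z.re

lemma ofReal_prod_norm_eq_prod_mul_prod {lam : ι → ℂ}
    (hlam : (univ.val.map lam).map conj = univ.val.map lam)
    {σ g : ℂ → ℂ} (hσ : ∀ z, ‖σ z‖ = 1) (hconj : ∀ z, σ (conj z) * g (conj z) = conj (σ z * g z))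
    (hreal : ∀ x : ℝ, 0 ≤ σ x * g x) :
    ((∏ i, ‖g (lam i)‖ : ℝ) : ℂ) = (∏ i, σ (lam i)) * ∏ i, g (lam i) := by
  have hnonneg : 0 ≤ ∏ i, σ (lam i) * g (lam i) := by
    simpa [Multiset.map_map, prod_map_val] using
      Multiset.prod_map_nonneg_of_map_conj hlam (f := fun z => σ z * g z) hconj hreal
  rw [← prod_mul_distrib, ← RCLike.norm_of_nonneg' hnonneg]
  simp [norm_prod, hσ]

end ConjugationInvariant

section RealSigns

lemma sign_mul_one_sub_pow_nonneg (x : ℝ) (k : ℕ) :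
    0 ≤ (if 1 < |x| then -1 else 1) * (if x < -1 then (-1) ^ k else 1) * (1 - x ^ k) := by
  rcases lt_or_ge x (-1) with hx | hx
  · have h1 : 1 ≤ (-x) ^ k := one_le_pow₀ (by linarith)
    have h2 : (-1 : ℝ) ^ k ≤ 1 := by rcases neg_one_pow_eq_or ℝ k with h | h <;> simp [h]
    rw [if_pos (by rw [abs_of_neg (by linarith)]; linarith), if_pos hx]
    nlinarith [neg_pow x k]
  · rw [if_neg hx.not_gt]
    rcases lt_or_ge 1 x with hx' | hx'
    · rw [if_pos (by rw [abs_of_pos (by linarith)]; linarith)]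
      nlinarith [one_le_pow₀ hx'.le (n := k)]
    · have habs : |x| ≤ 1 := abs_le.mpr ⟨hx, hx'⟩
      have : x ^ k ≤ 1 :=
        (le_abs_self _).trans (by rw [abs_pow]; exact pow_le_one₀ (abs_nonneg x) habs)
      rw [if_neg habs.not_gt]
      linarith

lemma sign_mul_one_add_pow_nonneg (x : ℝ) (k : ℕ) :
    0 ≤ (if x < -1 then (-1) ^ k else 1) * (1 + x ^ k) := by
  rcases lt_or_ge x (-1) with hx | hx
  · have h1 : 1 ≤ (-x) ^ k := one_le_pow₀ (by linarith)
    have h2 : -1 ≤ (-1 : ℝ) ^ k := by rcases neg_one_pow_eq_or ℝ k with h | h <;> simp [h]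
    rw [if_pos hx]
    nlinarith [neg_pow x k]
  · rw [if_neg hx.not_gt, one_mul]
    rcases le_total 0 x with h0 | h0
    · linarith [pow_nonneg h0 k]
    · have : |x ^ k| ≤ 1 := by
        rw [abs_pow]
        exact pow_le_one₀ (abs_nonneg x) (abs_le.mpr ⟨hx, by linarith⟩)
      linarith [neg_abs_le (x ^ k)]

end RealSigns

section SignedProducts

variable {ι : Type*} [Fintype ι]

noncomputable def numRealLtNegOne (lam : ι → ℂ) : ℕ := #{i | (lam i).im = 0 ∧ (lam i).re < -1}

noncomputable def numRealOneLtAbs (lam : ι → ℂ) : ℕ :=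
  #{i | (lam i).im = 0 ∧ 1 < |(lam i).re|}

lemma prod_ite_eq_pow {M : Type*} [CommMonoid M] (p : ι → Prop) [DecidablePred p] (c : M) :
    ∏ i, (if p i then c else 1) = c ^ #{i | p i} := by
  rw [← prod_filter, prod_const]

variable {lam : ι → ℂ}

lemma ofReal_prod_norm_one_add_pow (hlam : (univ.val.map lam).map conj = univ.val.map lam)
    (k : ℕ) : ((∏ i, ‖1 + lam i ^ k‖ : ℝ) : ℂ)
      = ((-1) ^ numRealLtNegOne lam) ^ k * ∏ i, (1 + lam i ^ k) := by
  rw [ofReal_prod_norm_eq_prod_mul_prod hlam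
    (σ := fun z => if z.im = 0 ∧ z.re < -1 then (-1) ^ k else 1) (g := fun z => 1 + z ^ k)]
  · rw [prod_ite_eq_pow, pow_right_comm, numRealLtNegOne]
  · intro z
    split_ifs <;> simp
  · intro z
    split_ifs <;> simp_all
  · intro x
    have := zero_le_real.mpr (sign_mul_one_add_pow_nonneg x k)
    push_cast [apply_ite ofReal] at this
    simpa using this

lemma ofReal_prod_norm_one_sub_pow (hlam : (univ.val.map lam).map conj = univ.val.map lam)
    (k : ℕ) : ((∏ i, ‖1 - lam i ^ k‖ : ℝ) : ℂ)
      = (-1) ^ numRealOneLtAbs lam * ((-1) ^ numRealLtNegOne lam) ^ k * ∏ i, (1 - lam i ^ k) := by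
  rw [ofReal_prod_norm_eq_prod_mul_prod hlam (σ := fun z =>
      (if z.im = 0 ∧ 1 < |z.re| then -1 else 1) * if z.im = 0 ∧ z.re < -1 then (-1) ^ k else 1)
    (g := fun z => 1 - z ^ k)]
  · rw [prod_mul_distrib, prod_ite_eq_pow, prod_ite_eq_pow, pow_right_comm (-1 : ℂ) k,
      numRealLtNegOne, numRealOneLtAbs]
  · intro z
    split_ifs <;> simp
  · intro z
    split_ifs <;> simp_all
  · intro x
    have := zero_le_real.mpr (sign_mul_one_sub_pow_nonneg x k)
    push_cast [apply_ite ofReal] at this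
    simpa using this

lemma neg_one_pow_mul_prod_one_sub_add_prod_one_add_div_two {K : Type*} [Field K]
    [NeZero (2 : K)] (m k : ℕ) (lam : ι → K) :
    ((-1) ^ m * ∏ i, (1 - lam i ^ k) + ∏ i, (1 + lam i ^ k)) / 2
      = ∑ t ∈ univ.powerset with Even (m + #t), (∏ i ∈ t, lam i) ^ k := by
  have hsub : ∏ i, (1 - lam i ^ k) = ∑ t ∈ univ.powerset, (-1) ^ #t * (∏ i ∈ t, lam i) ^ k := by
    simp_rw [sub_eq_add_neg, prod_one_add, prod_neg, prod_pow]
  rw [hsub, prod_one_add, mul_sum, ← sum_add_distrib, sum_div, sum_filter]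
  refine sum_congr rfl fun t _ => ?_
  simp_rw [prod_pow, ← mul_assoc, ← pow_add]
  rcases Nat.even_or_odd (m + #t) with h | h
  · rw [if_pos h, h.neg_one_pow]
    field_simp
    ring
  · rw [if_neg (Nat.not_even_iff_odd.mpr h), h.neg_one_pow]
    ring

lemma exists_powerSum_eq_half_prod_norm_add
    (hlam : (univ.val.map lam).map conj = univ.val.map lam) :
    ∃ (a : ℕ) (μ : Fin a → ℂ), ∀ k : ℕ,
      ((((∏ i, ‖1 - lam i ^ k‖) + ∏ i, ‖1 + lam i ^ k‖) / 2 : ℝ) : ℂ) = ∑ j, μ j ^ k := by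
  set T := (univ : Finset ι).powerset.filter fun t => Even (numRealOneLtAbs lam + #t)
  set μ : Finset ι → ℂ := fun t => (-1) ^ numRealLtNegOne lam * ∏ i ∈ t, lam i
  refine ⟨#T, fun j => μ (T.equivFin.symm j), fun k => ?_⟩
  calc ((((∏ i, ‖1 - lam i ^ k‖) + ∏ i, ‖1 + lam i ^ k‖) / 2 : ℝ) : ℂ)
      = ((-1) ^ numRealLtNegOne lam) ^ k * (((-1) ^ numRealOneLtAbs lam * ∏ i, (1 - lam i ^ k)
          + ∏ i, (1 + lam i ^ k)) / 2) := by
        rw [ofReal_div, ofReal_add, ofReal_prod_norm_one_sub_pow hlam,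
          ofReal_prod_norm_one_add_pow hlam]
        push_cast
        ring
    _ = ∑ t ∈ T, μ t ^ k := by
        rw [neg_one_pow_mul_prod_one_sub_add_prod_one_add_div_two, mul_sum]
        simp only [T, μ, mul_pow]
    _ = ∑ j, μ (T.equivFin.symm j) ^ k := by
        rw [← sum_coe_sort T, ← T.equivFin.symm.sum_comp]

end SignedProducts

section PowerSums

variable {ι : Type*} [Fintype ι]

lemma exists_pos_forall_norm_mul_lt_one {R : Type*} [SeminormedRing R] (μ : ι → R) :
    ∃ r > 0, ∀ z : R, ‖z‖ < r → ∀ j, ‖μ j * z‖ < 1 := by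
  set S := ∑ j, ‖μ j‖ + 1
  have hS : 0 < S := by positivity
  refine ⟨S⁻¹, inv_pos.mpr hS, fun z hz j => ?_⟩
  have hj : ‖μ j‖ ≤ S := by
    linarith [single_le_sum (fun j _ => norm_nonneg (μ j)) (mem_univ j)]
  calc ‖μ j * z‖ ≤ ‖μ j‖ * ‖z‖ := norm_mul_le _ _
    _ ≤ S * ‖z‖ := by gcongr
    _ < S * S⁻¹ := by gcongr
    _ = 1 := mul_inv_cancel₀ hS.ne'

lemma exists_hasSum_powerSum_and_exp_eq_inv_prod (μ : ι → ℂ) :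
    ∃ r > 0, ∀ z : ℂ, ‖z‖ < r → ∃ s : ℂ,
      HasSum (fun k : ℕ => (∑ j, μ j ^ (k + 1)) * z ^ (k + 1) / (k + 1)) s ∧
      exp s = (∏ j, (1 - μ j * z))⁻¹ := by
  obtain ⟨r, hr, hμ⟩ := exists_pos_forall_norm_mul_lt_one μ
  refine ⟨r, hr, fun z hz => ⟨∑ j, -log (1 - μ j * z), ?_, ?_⟩⟩
  · convert hasSum_sum fun j _ => hasSum_taylorSeries_neg_log' (hμ z hz j) using 2 with k
    rw [sum_mul, sum_div]
    simp_rw [mul_pow]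
  · have hne : ∀ j, 1 - μ j * z ≠ 0 := fun j h => by
      simpa [(sub_eq_zero.mp h).symm] using hμ z hz j
    simp [exp_sum, exp_neg, exp_log (hne _)]

end PowerSums

theorem stmt2_general (n : ℕ) (D : Matrix (Fin n) (Fin n) ℤ)
    (lam : Fin n → ℂ)
    (hlam : (D.charpoly).map (Int.castRingHom ℂ) = ∏ i, (X - C (lam i))) :
    ∃ (a b : ℕ) (μ : Fin a → ℂ) (ν : Fin b → ℂ) (r : ℝ), 0 < r ∧
      ∀ z : ℂ, ‖z‖ < r →
        ∃ s : ℂ,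
          HasSum (fun k : ℕ =>
            ((((∏ i, ‖1 - lam i ^ (k + 1)‖)
                + ∏ i, ‖1 + lam i ^ (k + 1)‖) / 2 : ℝ) : ℂ)
              * z ^ (k + 1) / (k + 1)) s ∧
          Complex.exp s = (∏ i, (1 - ν i * z)) / ∏ i, (1 - μ i * z) := by
  have hreal : (D.charpoly.map (Int.castRingHom ℝ)).map ofRealHom = ∏ i, (X - C (lam i)) := by
    rw [Polynomial.map_map, ← hlam]
    congr 1
  obtain ⟨a, μ, hμ⟩ :=
    exists_powerSum_eq_half_prod_norm_add (map_conj_eq_of_map_ofReal_eq_prod hreal)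
  obtain ⟨r, hr, hrat⟩ := exists_hasSum_powerSum_and_exp_eq_inv_prod μ
  refine ⟨a, 0, μ, Fin.elim0, r, hr, fun z hz => ?_⟩
  obtain ⟨s, hs, hexp⟩ := hrat z hz
  exact ⟨s, by simpa only [hμ] using hs, by simp [hexp]⟩

/-- with `λ₁, …, λₙ` the complex eigenvalues of `D ∈ GLₙ(ℤ)`, there are complex
numbers `μ₁, …, μ_a, ν₁, …, ν_b` such that on a disk of positive radius about `0`, the series
`∑_{k≥1} [(∏|1-λᵢᵏ| + ∏|1+λᵢᵏ|)/2] zᵏ/k` converges and the exponential of its sum is the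
rational function `∏(1-νᵢz) / ∏(1-μᵢz)`. -/
theorem stmt2 (n : ℕ) (D : Matrix (Fin n) (Fin n) ℤ) (hD : IsUnit D)
    (lam : Fin n → ℂ)
    (hlam : (D.charpoly).map (Int.castRingHom ℂ) = ∏ i, (X - C (lam i))) :
    ∃ (a b : ℕ) (μ : Fin a → ℂ) (ν : Fin b → ℂ) (r : ℝ), 0 < r ∧
      ∀ z : ℂ, ‖z‖ < r →
        ∃ s : ℂ,
          HasSum (fun k : ℕ =>
            ((((∏ i, ‖1 - lam i ^ (k + 1)‖)
                + ∏ i, ‖1 + lam i ^ (k + 1)‖) / 2 : ℝ) : ℂ)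
              * z ^ (k + 1) / (k + 1)) s ∧
          Complex.exp s = (∏ i, (1 - ν i * z)) / ∏ i, (1 - μ i * z) :=
  stmt2_general n D lam hlam
end

section
/- Let D ∈ GLₙ(ℤ) and d ∈ ℤⁿ. Then there exist a non-negative integer l and non-negative integers c₁, …, c_l such that for every positive integer k, O(Iₙ − Dᵏ, [∑_{i=0}^{k−1} Dⁱ] d) = c₁ a¹_k + c₂ a²_k + ⋯ + c_l aˡ_k. -/
open Matrix

/-- `solCount A a` : the number of solutions `x` over `ℤ/2ℤ` of the linear system
`Ā x = ā`, where `Ā`, `ā` are the mod 2 reductions of `A` and `a`. -/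
noncomputable def solCount {n : ℕ} (A : Matrix (Fin n) (Fin n) ℤ) (a : Fin n → ℤ) : ℕ :=
  Nat.card {x : Fin n → ZMod 2 //
    (A.map (Int.cast : ℤ → ZMod 2)).mulVec x = fun i => ((a i : ZMod 2))}

/-- The sequence `aⁱ` with `aⁱ_k = i` if `i ∣ k` and `aⁱ_k = 0` otherwise. -/
def aSeq (i k : ℕ) : ℕ := if i ∣ k then i else 0

/-- The minimal period of a point under a permutation of a finite type equals the
cardinality of its orbit under the cyclic group generated by the permutation. -/
theorem perm_card_orbit {β : Type*} [Fintype β] [DecidableEq β] (σ : Equiv.Perm β) (x : β) :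
    Function.minimalPeriod (⇑σ) x = Nat.card (MulAction.orbit (Subgroup.zpowers σ) x) := by
  rw [Nat.card_congr (MulAction.orbitZPowersEquiv σ x), Nat.card_zmod]; rfl

theorem minPer_pos {β : Type*} [Fintype β] [DecidableEq β] (σ : Equiv.Perm β) (x : β) :
    0 < Function.minimalPeriod (⇑σ) x := by
  rw [perm_card_orbit]
  have : Nonempty (MulAction.orbit (Subgroup.zpowers σ) x) :=
    ⟨⟨x, MulAction.mem_orbit_self x⟩⟩
  exact Nat.card_pos

theorem minPer_le {β : Type*} [Fintype β] [DecidableEq β] (σ : Equiv.Perm β) (x : β) :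
    Function.minimalPeriod (⇑σ) x ≤ Fintype.card β := by
  rw [perm_card_orbit, ← Nat.card_eq_fintype_card]
  exact Nat.card_le_card_of_injective _ Subtype.val_injective

/-- The number of points of minimal period `j` under a permutation is divisible by `j`. -/
theorem minPer_dvd_card {β : Type*} [Fintype β] [DecidableEq β] (σ : Equiv.Perm β) (j : ℕ) :
    j ∣ (Finset.univ.filter (fun x => Function.minimalPeriod (⇑σ) x = j)).card := by
  classical
  set G := Subgroup.zpowers σ
  letI : Fintype (MulAction.orbitRel.Quotient G β) := Fintype.ofFinite _
  rw [Finset.card_eq_sum_card_fiberwise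
    (f := fun x => (Quotient.mk'' x : MulAction.orbitRel.Quotient G β)) (t := Finset.univ)
    (fun x _ => Finset.mem_univ _)]
  apply Finset.dvd_sum
  intro ω _
  by_cases hT : ((Finset.univ.filter (fun x => Function.minimalPeriod (⇑σ) x = j)).filter
      (fun x => (Quotient.mk'' x : MulAction.orbitRel.Quotient G β) = ω)).Nonempty
  · obtain ⟨x₀, hx₀⟩ := hT
    simp only [Finset.mem_filter, Finset.mem_univ, true_and] at hx₀
    obtain ⟨hP₀, hω₀⟩ := hx₀
    have key : ((Finset.univ.filter (fun x => Function.minimalPeriod (⇑σ) x = j)).filter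
        (fun x => (Quotient.mk'' x : MulAction.orbitRel.Quotient G β) = ω))
        = (MulAction.orbit G x₀).toFinset := by
      ext x
      simp only [Finset.mem_filter, Finset.mem_univ, true_and, Set.mem_toFinset]
      constructor
      · rintro ⟨hPx, hωx⟩
        rw [← hω₀, Quotient.eq''] at hωx
        exact hωx
      · intro hx
        have horb : MulAction.orbit G x = MulAction.orbit G x₀ := MulAction.orbit_eq_iff.2 hx
        constructor
        · rw [perm_card_orbit, horb, ← perm_card_orbit, hP₀]
        · rw [← hω₀, Quotient.eq'']
          exact hx
    rw [key, Set.toFinset_card, ← Nat.card_eq_fintype_card, ← perm_card_orbit, hP₀]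
  · rw [Finset.not_nonempty_iff_eq_empty] at hT
    rw [hT, Finset.card_empty]
    exact dvd_zero j

/-- Counting periodic points of a permutation of a finite type. -/
theorem perm_count {β : Type*} [Fintype β] [DecidableEq β] (σ : Equiv.Perm β) :
    ∃ c : Fin (Fintype.card β) → ℕ, ∀ k : ℕ, 0 < k →
      Nat.card {x : β // σ^[k] x = x}
        = ∑ j : Fin (Fintype.card β), c j * aSeq ((j : ℕ) + 1) k := by
  classical
  set P : β → ℕ := Function.minimalPeriod (⇑σ) with hP
  set l := Fintype.card β with hl
  have hpos : ∀ x : β, 0 < P x := minPer_pos σ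
  have hle : ∀ x : β, P x ≤ l := minPer_le σ
  have dvds : ∀ j : ℕ, j ∣ (Finset.univ.filter (fun x => P x = j)).card :=
    minPer_dvd_card σ
  refine ⟨fun j => (Finset.univ.filter (fun x => P x = (j : ℕ) + 1)).card / ((j : ℕ) + 1),
    fun k hk => ?_⟩
  have hcard : Nat.card {x : β // σ^[k] x = x}
      = (Finset.univ.filter (fun x : β => P x ∣ k)).card := by
    rw [Nat.card_eq_fintype_card, Fintype.card_subtype]
    congr 1
    apply Finset.filter_congr
    intro x _
    simp only [hP, ← Function.isPeriodicPt_iff_minimalPeriod_dvd]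
    exact Iff.rfl
  rw [hcard]
  have hfib : ∀ x : β, x ∈ Finset.univ.filter (fun x : β => P x ∣ k) →
      (⟨P x - 1, by have := hle x; have := hpos x; omega⟩ : Fin l)
        ∈ (Finset.univ : Finset (Fin l)) := fun x _ => Finset.mem_univ _
  rw [Finset.card_eq_sum_card_fiberwise hfib]
  apply Finset.sum_congr rfl
  intro j _
  have hjeq : ∀ x : β,
      ((⟨P x - 1, by have := hle x; have := hpos x; omega⟩ : Fin l) = j)
      ↔ P x = (j : ℕ) + 1 := by
    intro x
    have := hpos x
    constructor
    · intro h; have := congrArg Fin.val h; simp at this; omega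
    · intro h; apply Fin.ext; simp [h]
  beta_reduce
  by_cases hdk : ((j : ℕ) + 1) ∣ k
  · simp only [aSeq, if_pos hdk]
    rw [Nat.div_mul_cancel (dvds _)]
    rw [Finset.filter_filter]
    congr 1
    apply Finset.filter_congr
    intro x _
    simp only [Finset.mem_univ, hjeq x]
    constructor
    · rintro ⟨_, h⟩; exact h
    · intro h; exact ⟨h ▸ hdk, h⟩
  · simp only [aSeq, if_neg hdk, mul_zero]
    rw [Finset.filter_filter, Finset.card_eq_zero, Finset.filter_eq_empty_iff]
    intro x _
    rintro ⟨hxk, hxj⟩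
    rw [hjeq x] at hxj
    exact hdk (hxj ▸ hxk)

/-- The solution count equals the number of fixed points of the `k`-th iterate of the
affine map `x ↦ D̄ x + d̄` over `ℤ/2ℤ`. -/
theorem bridge (n : ℕ) (D : Matrix (Fin n) (Fin n) ℤ) (hD : IsUnit D) (d : Fin n → ℤ) :
    ∃ σ : Equiv.Perm (Fin n → ZMod 2),
      (∀ k : ℕ, solCount (1 - D ^ k) ((∑ i ∈ Finset.range k, D ^ i).mulVec d)
        = Nat.card {x : Fin n → ZMod 2 // σ^[k] x = x}) := by
  classical
  set D2 : Matrix (Fin n) (Fin n) (ZMod 2) := D.map (Int.cast : ℤ → ZMod 2) with hD2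
  have hmap : D2 = (Int.castRingHom (ZMod 2)).mapMatrix D := rfl
  have hU : IsUnit D2 := by rw [hmap]; exact hD.map _
  obtain ⟨u, hu⟩ := hU
  set db : Fin n → ZMod 2 := fun i => ((d i : ZMod 2)) with hdb
  refine ⟨{ toFun := fun x => D2.mulVec x + db
            invFun := fun y => ((↑u⁻¹ : Matrix (Fin n) (Fin n) (ZMod 2))).mulVec (y - db)
            left_inv := by
              intro x
              simp only [add_sub_cancel_right, Matrix.mulVec_mulVec, ← hu,
                Units.inv_mul, Matrix.one_mulVec]
            right_inv := by
              intro y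
              simp only [Matrix.mulVec_mulVec, ← hu, Units.mul_inv, Matrix.one_mulVec,
                sub_add_cancel] }, ?_⟩
  intro k
  have hiter : ∀ (k : ℕ) (x : Fin n → ZMod 2),
      (fun x => D2.mulVec x + db)^[k] x
        = (D2 ^ k).mulVec x + (∑ i ∈ Finset.range k, D2 ^ i).mulVec db := by
    intro k
    induction k with
    | zero => intro x; simp
    | succ m ih =>
        intro x
        rw [Function.iterate_succ_apply', ih x]
        simp only [Matrix.mulVec_add, Matrix.mulVec_mulVec, geom_sum_succ,
          Matrix.add_mulVec, Matrix.one_mulVec, ← pow_succ']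
        abel
  have hpow : ∀ k : ℕ, (D ^ k).map (Int.cast : ℤ → ZMod 2) = D2 ^ k := by
    intro k
    show (Int.castRingHom (ZMod 2)).mapMatrix (D ^ k) = _
    rw [map_pow]; rfl
  have hsub : (1 - D ^ k).map (Int.cast : ℤ → ZMod 2) = 1 - D2 ^ k := by
    show (Int.castRingHom (ZMod 2)).mapMatrix (1 - D ^ k) = _
    rw [map_sub, _root_.map_one, map_pow]; rfl
  have hvec : ∀ (A : Matrix (Fin n) (Fin n) ℤ) (v : Fin n → ℤ),
      (fun i => ((A.mulVec v i : ℤ) : ZMod 2))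
        = (A.map (Int.cast : ℤ → ZMod 2)).mulVec (fun j => ((v j : ZMod 2))) := by
    intro A v
    funext i
    simp [Matrix.mulVec, dotProduct, Matrix.map_apply]
  have hsum : (∑ i ∈ Finset.range k, D ^ i).map (Int.cast : ℤ → ZMod 2)
      = ∑ i ∈ Finset.range k, D2 ^ i := by
    show (Int.castRingHom (ZMod 2)).mapMatrix (∑ i ∈ Finset.range k, D ^ i) = _
    rw [map_sum]
    exact Finset.sum_congr rfl fun i _ => by rw [map_pow]; rfl
  unfold solCount
  apply Nat.card_congr
  apply Equiv.subtypeEquivRight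
  intro x
  rw [hsub, hvec, hsum]
  simp only [Equiv.coe_fn_mk]
  rw [hiter k x]
  rw [Matrix.sub_mulVec, Matrix.one_mulVec, sub_eq_iff_eq_add,
    add_comm ((∑ i ∈ Finset.range k, D2 ^ i) *ᵥ _), eq_comm]

/-- for `D ∈ GLₙ(ℤ)` and `d ∈ ℤⁿ`, there exist `l` and non-negative integers
`c₁, …, c_l` with `O(Iₙ - Dᵏ, [∑_{i<k} Dⁱ] d) = c₁ a¹_k + ⋯ + c_l aˡ_k` for all `k ≥ 1`. -/
theorem stmt3 (n : ℕ) (D : Matrix (Fin n) (Fin n) ℤ) (hD : IsUnit D) (d : Fin n → ℤ) :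
    ∃ (l : ℕ) (c : Fin l → ℕ),
      ∀ k : ℕ, 0 < k →
        solCount (1 - D ^ k) ((∑ i ∈ Finset.range k, D ^ i).mulVec d)
          = ∑ j : Fin l, c j * aSeq ((j : ℕ) + 1) k := by
  obtain ⟨σ, hσ⟩ := bridge n D hD d
  obtain ⟨c, hc⟩ := perm_count σ
  exact ⟨Fintype.card (Fin n → ZMod 2), c, fun k hk => (hσ k).trans (hc k hk)⟩
end

section
/- Let 𝔽 be a field, let N be a nilpotent upper-triangular k × k matrix over 𝔽, and let D be an invertible l × l matrix over 𝔽. Then for every k × l matrix B over 𝔽, there exists a unique k × l matrix X over 𝔽 such that N X + X D = B. -/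
open Matrix

lemma strict_pow_zero {F : Type*} [Field F] {k : ℕ}
    (N : Matrix (Fin k) (Fin k) F) (hN : ∀ i j : Fin k, j ≤ i → N i j = 0) :
    ∀ m (i j : Fin k), (j : ℕ) < (i : ℕ) + m → (N ^ m) i j = 0 := by
  intro m
  induction m with
  | zero =>
    intro i j hij
    simp only [pow_zero]
    have : i ≠ j := by
      intro h; subst h; omega
    simp [Matrix.one_apply, this]
  | succ m ih =>
    intro i j hij
    rw [pow_succ', Matrix.mul_apply]
    apply Finset.sum_eq_zero
    intro c _
    by_cases hc : c ≤ i
    · rw [hN i c hc, zero_mul]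
    · push_neg at hc
      have : (j : ℕ) < (c : ℕ) + m := by
        have : (i : ℕ) < (c : ℕ) := hc
        omega
      rw [ih c j this, mul_zero]

/-- if `N` is a nilpotent upper-triangular `k × k` matrix and `D` an invertible
`l × l` matrix over a field `𝔽`, then for every `k × l` matrix `B` there is a unique `k × l`
matrix `X` with `N X + X D = B`. -/
theorem stmt4 {F : Type*} [Field F] (k l : ℕ)
    (N : Matrix (Fin k) (Fin k) F) (hN : ∀ i j : Fin k, j ≤ i → N i j = 0)
    (D : Matrix (Fin l) (Fin l) F) (hD : IsUnit D)
    (B : Matrix (Fin k) (Fin l) F) :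
    ∃! X : Matrix (Fin k) (Fin l) F, N * X + X * D = B := by
  have hNk : N ^ k = 0 := by
    ext i j
    exact strict_pow_zero N hN k i j (by omega)
  -- the linear map X ↦ N X + X D
  set f : Matrix (Fin k) (Fin l) F →ₗ[F] Matrix (Fin k) (Fin l) F :=
    { toFun := fun X => N * X + X * D
      map_add' := fun X Y => by simp only [Matrix.mul_add, Matrix.add_mul]; abel
      map_smul' := fun c X => by
        simp [Matrix.mul_smul, Matrix.smul_mul, smul_add] } with hf
  have hinj : Function.Injective f := by
    rw [injective_iff_map_eq_zero]
    intro X hX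
    simp only [hf, LinearMap.coe_mk, AddHom.coe_mk] at hX
    -- X = -(N * X) * D⁻¹
    have hDD : D * D⁻¹ = 1 := Matrix.mul_nonsing_inv D (Matrix.isUnit_iff_isUnit_det D |>.mp hD)
    have hX' : X = -(N * X) * D⁻¹ := by
      have h1 : X * D = -(N * X) := by linear_combination (norm := noncomm_ring) hX
      calc X = X * D * D⁻¹ := by rw [Matrix.mul_assoc, hDD, Matrix.mul_one]
        _ = -(N * X) * D⁻¹ := by rw [h1]
    have key : ∀ m, X = (-1 : F) ^ m • (N ^ m * X * D⁻¹ ^ m) := by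
      intro m
      induction m with
      | zero => simp
      | succ m ih =>
        calc X = (-1 : F) ^ m • (N ^ m * X * D⁻¹ ^ m) := ih
          _ = (-1 : F) ^ m • (N ^ m * (-(N * X) * D⁻¹) * D⁻¹ ^ m) := by rw [← hX']
          _ = (-1 : F) ^ (m + 1) • (N ^ (m + 1) * X * D⁻¹ ^ (m + 1)) := by
            have h2 : N ^ m * (-(N * X) * D⁻¹) * D⁻¹ ^ m
                = -(N ^ (m + 1) * X * D⁻¹ ^ (m + 1)) := by
              rw [pow_succ, pow_succ' D⁻¹]
              simp only [Matrix.mul_neg, Matrix.neg_mul, neg_inj, Matrix.mul_assoc]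
            rw [h2, smul_neg, pow_succ (-1 : F) m, mul_neg_one, neg_smul]
    have := key k
    rw [hNk] at this
    simpa using this
  have hsurj : Function.Surjective f :=
    (LinearMap.injective_iff_surjective (f := f)).mp hinj
  obtain ⟨X, hX⟩ := hsurj B
  exact ⟨X, hX, fun Y hY => hinj (show f Y = f X from hY.trans hX.symm)⟩
end

section
/- Let D ∈ GLₙ(ℤ/2ℤ) and for every positive integer k set V_k = { x ∈ (ℤ/2ℤ)ⁿ : (Iₙ − Dᵏ) x = 0 }, W_k = V_k \ (V₁ ∪ ⋯ ∪ V_{k−1}), and w_k = |W_k|. Then for every positive integer k, k divides w_k. -/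
open Matrix

/-- `V_k = {x ∈ (ℤ/2ℤ)ⁿ : (Iₙ - Dᵏ)x = 0}`, the fixed points of `Dᵏ`. -/
def Vset {n : ℕ} (D : Matrix (Fin n) (Fin n) (ZMod 2)) (k : ℕ) : Set (Fin n → ZMod 2) :=
  {x | (1 - D ^ k).mulVec x = 0}

/-- `W_k = V_k \ (V₁ ∪ ⋯ ∪ V_{k-1})`. -/
def Wset {n : ℕ} (D : Matrix (Fin n) (Fin n) (ZMod 2)) (k : ℕ) : Set (Fin n → ZMod 2) :=
  Vset D k \ ⋃ l ∈ Finset.Ico 1 k, Vset D l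

lemma mem_Vset_iff {n : ℕ} {D : Matrix (Fin n) (Fin n) (ZMod 2)} {l : ℕ}
    {x : Fin n → ZMod 2} : x ∈ Vset D l ↔ (D ^ l).mulVec x = x := by
  simp only [Vset, Set.mem_setOf_eq, sub_mulVec, one_mulVec, sub_eq_zero]
  exact eq_comm

lemma pow_mulVec_mem_Vset_iff {n : ℕ} {D : Matrix (Fin n) (Fin n) (ZMod 2)} (hD : IsUnit D)
    {l : ℕ} (m : ℕ) {x : Fin n → ZMod 2} :
    (D ^ m).mulVec x ∈ Vset D l ↔ x ∈ Vset D l := by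
  have hinj : Function.Injective ((D ^ m).mulVec) :=
    mulVec_injective_iff_isUnit.2 (hD.pow m)
  rw [mem_Vset_iff, mem_Vset_iff, mulVec_mulVec, ← pow_add, add_comm l m, pow_add,
    ← mulVec_mulVec]
  exact hinj.eq_iff

lemma pow_mulVec_mem_Wset {n : ℕ} {D : Matrix (Fin n) (Fin n) (ZMod 2)} (hD : IsUnit D)
    {k : ℕ} (m : ℕ) {x : Fin n → ZMod 2} (hx : x ∈ Wset D k) :
    (D ^ m).mulVec x ∈ Wset D k := by
  obtain ⟨h1, h2⟩ := hx
  refine ⟨(pow_mulVec_mem_Vset_iff hD m).2 h1, ?_⟩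
  intro hmem
  apply h2
  simp only [Set.mem_iUnion] at hmem ⊢
  obtain ⟨l, hl, hxl⟩ := hmem
  exact ⟨l, hl, (pow_mulVec_mem_Vset_iff hD m).1 hxl⟩

lemma pow_mod_mulVec {n : ℕ} {D : Matrix (Fin n) (Fin n) (ZMod 2)} {k : ℕ}
    {x : Fin n → ZMod 2} (hx : (D ^ k).mulVec x = x) (m : ℕ) :
    (D ^ (m % k)).mulVec x = (D ^ m).mulVec x := by
  conv_rhs => rw [← Nat.mod_add_div m k]
  rw [pow_add, ← mulVec_mulVec]
  induction (m / k) with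
  | zero => simp
  | succ q ih => rw [Nat.mul_succ, pow_add, ← mulVec_mulVec, hx, ih]

/-- The action of `ZMod k` (written multiplicatively) on `W_k` by `g • x = D^g x`. -/
def wAction {n k : ℕ} [NeZero k] (D : Matrix (Fin n) (Fin n) (ZMod 2)) (hD : IsUnit D) :
    MulAction (Multiplicative (ZMod k)) ↥(Wset D k) where
  smul g x := ⟨(D ^ (g.toAdd.val)).mulVec (x : Fin n → ZMod 2), pow_mulVec_mem_Wset hD _ x.2⟩
  one_smul x := by
    apply Subtype.ext
    show (D ^ ((1 : Multiplicative (ZMod k)).toAdd.val)).mulVec _ = _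
    simp
  mul_smul a b x := by
    apply Subtype.ext
    show (D ^ ((a * b).toAdd.val)).mulVec (x : Fin n → ZMod 2)
      = (D ^ (a.toAdd.val)).mulVec ((D ^ (b.toAdd.val)).mulVec (x : Fin n → ZMod 2))
    have hfix : (D ^ k).mulVec (x : Fin n → ZMod 2) = x := mem_Vset_iff.1 x.2.1
    have hval : (a * b).toAdd.val = (a.toAdd.val + b.toAdd.val) % k := by
      show (a.toAdd + b.toAdd).val = _
      rw [ZMod.val_add]
    rw [mulVec_mulVec, ← pow_add, hval, pow_mod_mulVec hfix]

lemma wAction_smul_def {n k : ℕ} [NeZero k] (D : Matrix (Fin n) (Fin n) (ZMod 2))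
    (hD : IsUnit D) (g : Multiplicative (ZMod k)) (x : ↥(Wset D k)) :
    ((wAction D hD).smul g x : Fin n → ZMod 2)
      = (D ^ (g.toAdd.val)).mulVec (x : Fin n → ZMod 2) := rfl

/-- for `D ∈ GLₙ(ℤ/2ℤ)` and `w_k = |W_k|`, `k` divides `w_k` for every `k ≥ 1`. -/
theorem stmt8 (n : ℕ) (D : Matrix (Fin n) (Fin n) (ZMod 2)) (hD : IsUnit D)
    (k : ℕ) (hk : 0 < k) :
    k ∣ Nat.card (Wset D k) := by
  haveI : NeZero k := ⟨hk.ne'⟩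
  classical
  letI inst := wAction (k := k) D hD
  -- the action is free
  have hstab : ∀ x : ↥(Wset D k), MulAction.stabilizer (Multiplicative (ZMod k)) x = ⊥ := by
    intro x
    ext g
    simp only [MulAction.mem_stabilizer_iff, Subgroup.mem_bot]
    constructor
    · intro h
      have hval : (D ^ (g.toAdd.val)).mulVec (x : Fin n → ZMod 2) = x := by
        rw [← wAction_smul_def D hD g x]
        exact congrArg Subtype.val h
      by_contra hg
      have hne : g.toAdd.val ≠ 0 := by
        intro h0
        exact hg ((ZMod.val_eq_zero _).1 h0)
      have hlt : g.toAdd.val < k := ZMod.val_lt _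
      exact x.2.2 (Set.mem_iUnion.2 ⟨g.toAdd.val, Set.mem_iUnion.2
        ⟨Finset.mem_Ico.2 ⟨Nat.one_le_iff_ne_zero.2 hne, hlt⟩, mem_Vset_iff.2 hval⟩⟩)
    · rintro rfl
      exact one_smul _ x
  -- count via orbits
  haveI : Finite ↥(Wset D k) := Subtype.finite
  have hcardG : Nat.card (Multiplicative (ZMod k)) = k := by
    rw [Nat.card_congr (Multiplicative.toAdd (α := ZMod k)), Nat.card_zmod]
  have key : ∀ x : ↥(Wset D k),
      Nat.card ((Multiplicative (ZMod k)) ⧸ MulAction.stabilizer (Multiplicative (ZMod k)) x)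
        = k := by
    intro x
    rw [hstab x]
    have h1 := Subgroup.card_eq_card_quotient_mul_card_subgroup
      (⊥ : Subgroup (Multiplicative (ZMod k)))
    rw [Subgroup.card_bot, mul_one] at h1
    rw [← h1, hcardG]
  have e1 := MulAction.selfEquivSigmaOrbitsQuotientStabilizer (Multiplicative (ZMod k))
    ↥(Wset D k)
  haveI : Fintype ↥(Wset D k) := Fintype.ofFinite _
  haveI : Fintype (Quotient (MulAction.orbitRel (Multiplicative (ZMod k)) ↥(Wset D k))) :=
    Fintype.ofFinite _
  haveI : ∀ ω : Quotient (MulAction.orbitRel (Multiplicative (ZMod k)) ↥(Wset D k)),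
      Fintype ((Multiplicative (ZMod k)) ⧸ MulAction.stabilizer (Multiplicative (ZMod k)) ω.out)
      := fun ω => Fintype.ofFinite _
  rw [Nat.card_congr e1, Nat.card_eq_fintype_card, Fintype.card_sigma]
  have hterm : ∀ ω : Quotient (MulAction.orbitRel (Multiplicative (ZMod k)) ↥(Wset D k)),
      Fintype.card
        ((Multiplicative (ZMod k)) ⧸ MulAction.stabilizer (Multiplicative (ZMod k)) ω.out)
        = k := fun ω => by rw [← Nat.card_eq_fintype_card]; exact key _
  rw [Finset.sum_congr rfl fun ω _ => hterm ω, Finset.sum_const, smul_eq_mul]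
  exact dvd_mul_left k _
end

section
/- Let D ∈ GLₙ(ℤ/2ℤ) be unipotent upper-triangular and let d ∈ (ℤ/2ℤ)ⁿ. For every positive integer k set V_k = { x ∈ (ℤ/2ℤ)ⁿ : (Iₙ − Dᵏ) x = [∑_{i=0}^{k−1} Dⁱ] d }. If k = 2ʳ m with m odd, then V_k = V_{2ʳ}. -/
/-
Write `k = a m` with `a = 2ʳ` and put `B = ∑_{j<m} (Dᵃ)ʲ`. Both sides of the equation defining
`V_k` factor through `B`: `1 - Dᵏ = B (1 - Dᵃ)` and `∑_{i<k} Dⁱ = B ∑_{i<a} Dⁱ`. Since `D - 1` is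
nilpotent, so is `Dᵃ - 1`, hence `B ≡ m = 1` modulo a nilpotent commuting with it, so `B` is
invertible and cancels.
-/

open Matrix

/-- `V_k = {x ∈ (ℤ/2ℤ)ⁿ : (Iₙ - Dᵏ)x = [∑_{i<k} Dⁱ] d}`. -/
def VsetD {n : ℕ} (D : Matrix (Fin n) (Fin n) (ZMod 2)) (d : Fin n → ZMod 2) (k : ℕ) :
    Set (Fin n → ZMod 2) :=
  {x | (1 - D ^ k).mulVec x = (∑ i ∈ Finset.range k, D ^ i).mulVec d}

open Finset

theorem Matrix.isNilpotent_sub_one_of_isUpperTriangular {R n : Type*} [CommRing R] [Fintype n]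
    [DecidableEq n] [LinearOrder n] {M : Matrix n n R} (hM : M.IsUpperTriangular)
    (hdiag : ∀ i, M i i = 1) : IsNilpotent (M - 1) := by
  refine ⟨Fintype.card n, ?_⟩
  have h := M.aeval_self_charpoly
  -- Cayley–Hamilton, with characteristic polynomial `(X - 1)ⁿ`
  simpa [charpoly_of_isUpperTriangular M hM, hdiag] using h

section GeomSum

variable {R : Type*} [Ring R]

theorem IsNilpotent.pow_sub_one {x : R} (hx : IsNilpotent (x - 1)) (k : ℕ) :
    IsNilpotent (x ^ k - 1) := by
  have hcomm : Commute (x - 1) (∑ i ∈ range k, x ^ i) :=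
    (Commute.sum_right _ _ _ fun i _ ↦ Commute.self_pow x i).sub_left (.one_left _)
  rw [← mul_geom_sum]
  exact hcomm.isNilpotent_mul_right hx

theorem isUnit_geom_sum_of_isNilpotent_sub_one {x : R} (hx : IsNilpotent (x - 1)) {m : ℕ}
    (hm : IsUnit (m : R)) : IsUnit (∑ i ∈ range m, x ^ i) := by
  have hsplit : ∑ i ∈ range m, x ^ i = ∑ i ∈ range m, (x ^ i - 1) + m := by
    simp [sum_sub_distrib]
  have hnil : IsNilpotent (∑ i ∈ range m, (x ^ i - 1)) :=
    Commute.isNilpotent_sum (fun i _ ↦ hx.pow_sub_one i)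
      fun i j _ _ ↦ ((Commute.pow_pow_self x i j).sub_left (.one_left _)).sub_right (.one_right _)
  rw [hsplit]
  exact hnil.isUnit_add_right_of_commute hm (Nat.cast_commute m _).symm

theorem geom_sum_range_mul (x : R) (a m : ℕ) :
    ∑ i ∈ range (a * m), x ^ i = (∑ j ∈ range m, (x ^ a) ^ j) * ∑ i ∈ range a, x ^ i := by
  induction m with
  | zero => simp
  | succ m ih =>
    rw [mul_add_one, sum_range_add, ih, sum_range_succ, add_mul, ← pow_mul]
    simp only [pow_add, mul_sum]

end GeomSum

theorem VsetD_mul_eq_of_isUnit {n : ℕ} (D : Matrix (Fin n) (Fin n) (ZMod 2)) (d : Fin n → ZMod 2)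
    (a m : ℕ) (hB : IsUnit (∑ j ∈ range m, (D ^ a) ^ j)) : VsetD D d (a * m) = VsetD D d a := by
  ext x
  simp only [VsetD, Set.mem_ofPred_eq]
  rw [pow_mul, ← geom_sum_mul_neg, geom_sum_range_mul, ← mulVec_mulVec, ← mulVec_mulVec]
  exact (mulVec_injective_iff_isUnit.2 hB).eq_iff

/-- for a unipotent upper-triangular `D ∈ GLₙ(ℤ/2ℤ)` and `d ∈ (ℤ/2ℤ)ⁿ`,
if `k = 2ʳ m` with `m` odd then `V_k = V_{2ʳ}`. -/
theorem stmt9 (n : ℕ) (D : Matrix (Fin n) (Fin n) (ZMod 2))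
    (hdiag : ∀ i : Fin n, D i i = 1) (hupper : ∀ i j : Fin n, j < i → D i j = 0)
    (d : Fin n → ZMod 2) (k r m : ℕ) (hm : Odd m) (hk : k = 2 ^ r * m) :
    VsetD D d k = VsetD D d (2 ^ r) := by
  have hD : IsNilpotent (D - 1) :=
    isNilpotent_sub_one_of_isUpperTriangular (fun i j h ↦ hupper i j h) hdiag
  have htwo : (2 : Matrix (Fin n) (Fin n) (ZMod 2)) = 0 := by
    rw [← diagonal_ofNat, show (2 : ZMod 2) = 0 from rfl, diagonal_zero]
  have hm1 : (m : Matrix (Fin n) (Fin n) (ZMod 2)) = 1 :=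
    natCast_eq_one_of_odd_of_two_eq_zero hm htwo
  subst hk
  refine VsetD_mul_eq_of_isUnit D d _ _ ?_
  exact isUnit_geom_sum_of_isNilpotent_sub_one (hD.pow_sub_one _) (hm1 ▸ isUnit_one)
end

section
/- Let D ∈ GLₙ(ℤ) and d ∈ ℤⁿ. Then there exist a non-negative integer l and non-negative integers c₁, …, c_l such that for every complex z with |z| < 1, the series ∑_{k=1}^{∞} O(Iₙ − Dᵏ, [∑_{i=0}^{k−1} Dⁱ] d) · zᵏ/k converges and exp of its sum equals ∏_{i=1}^{l} (1 − zⁱ)^{−cᵢ}; in particular this function is rational. -/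
open Matrix

/-!
Modulo 2 the affine map `x ↦ D̄ x + d̄` is a permutation `σ` of `(ℤ/2ℤ)ⁿ`, and the solutions
counted by `O(Iₙ - Dᵏ, [∑_{i<k} Dⁱ] d)` are exactly the fixed points of `σᵏ`. A point whose
`σ`-orbit has size `p` is fixed by `σᵏ` iff `p ∣ k`, and `∑_{p ∣ k} zᵏ / k = -log (1 - zᵖ) / p`.
Summing over the `p` points of each orbit, every orbit of size `p` contributes `-log (1 - zᵖ)`,
so the exponential is `∏ (1 - zᵖ)⁻¹` over the orbits; `cᵢ` is the number of orbits of size `i`.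
-/

open Finset Function MulAction

namespace Matrix

variable {n R : Type*} [Fintype n] [DecidableEq n] [CommRing R]

noncomputable def affinePerm (M : Matrix n n R) (hM : IsUnit M) (b : n → R) :
    Equiv.Perm (n → R) :=
  Equiv.ofBijective (fun x => M *ᵥ x + b)
    ⟨(add_left_injective b).comp (mulVec_injective_of_isUnit hM),
      (Equiv.addRight b).surjective.comp (mulVec_surjective_iff_isUnit.mpr hM)⟩

@[simp]
theorem affinePerm_apply (M : Matrix n n R) (hM : IsUnit M) (b : n → R) (x : n → R) :
    affinePerm M hM b x = M *ᵥ x + b :=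
  rfl

theorem affinePerm_pow_apply (M : Matrix n n R) (hM : IsUnit M) (b : n → R) (k : ℕ)
    (x : n → R) :
    (affinePerm M hM b ^ k) x = (M ^ k) *ᵥ x + (∑ i ∈ range k, M ^ i) *ᵥ b := by
  induction k generalizing x with
  | zero => simp
  | succ k ih =>
    rw [pow_succ, Equiv.Perm.mul_apply, ih, affinePerm_apply, mulVec_add,
      mulVec_mulVec, ← pow_succ, sum_range_succ, add_mulVec]
    abel

theorem affinePerm_pow_apply_eq_self_iff (M : Matrix n n R) (hM : IsUnit M) (b : n → R)
    (k : ℕ) (x : n → R) :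
    (affinePerm M hM b ^ k) x = x ↔ (1 - M ^ k) *ᵥ x = (∑ i ∈ range k, M ^ i) *ᵥ b := by
  rw [affinePerm_pow_apply, sub_mulVec, one_mulVec, sub_eq_iff_eq_add', eq_comm]

end Matrix

theorem solCount_eq_card_fixedPoints {n : ℕ} {D : Matrix (Fin n) (Fin n) ℤ}
    (hD : IsUnit (D.map (Int.cast : ℤ → ZMod 2))) (d : Fin n → ℤ) (k : ℕ) :
    solCount (1 - D ^ k) ((∑ i ∈ range k, D ^ i) *ᵥ d) =
      Nat.card {x // (affinePerm _ hD (fun i => (d i : ZMod 2)) ^ k) x = x} := by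
  let φ := (Int.castRingHom (ZMod 2)).mapMatrix (m := Fin n)
  have hmat : ((1 - D ^ k).map (Int.cast : ℤ → ZMod 2)) = 1 - D.map Int.cast ^ k := by
    change φ (1 - D ^ k) = 1 - φ D ^ k
    rw [map_sub, map_one, map_pow]
  have hvec : (fun j => (((∑ i ∈ range k, D ^ i) *ᵥ d) j : ZMod 2)) =
      (∑ i ∈ range k, D.map Int.cast ^ i) *ᵥ fun j => (d j : ZMod 2) := by
    funext j
    have h := RingHom.map_mulVec (Int.castRingHom (ZMod 2)) (∑ i ∈ range k, D ^ i) d j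
    rw [← RingHom.mapMatrix_apply, map_sum] at h
    simp_rw [map_pow] at h
    exact h
  refine Nat.card_congr (Equiv.subtypeEquivRight fun x => ?_)
  rw [affinePerm_pow_apply_eq_self_iff, hmat, hvec]

namespace MulAction

variable {G X : Type*} [Group G] [MulAction G X]

theorem card_orbit_pos [Finite X] (x : X) : 0 < Nat.card (orbit G x) :=
  have : Nonempty (orbit G x) := (nonempty_orbit x).to_subtype
  Nat.card_pos

variable [Fintype X]

theorem sum_div_card_orbit [Fintype (orbitRel.Quotient G X)] {K : Type*} [Field K]
    [CharZero K] (f : ℕ → K) :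
    ∑ x : X, f (Nat.card (orbit G x)) / Nat.card (orbit G x) =
      ∑ ω : orbitRel.Quotient G X, f (Nat.card (orbit G ω.out)) := by
  classical
  rw [← (selfEquivSigmaOrbits G X).symm.sum_comp, Fintype.sum_sigma]
  refine Fintype.sum_congr _ _ fun ω => ?_
  have hconst : ∀ y : orbit G ω.out,
      orbit G ((selfEquivSigmaOrbits G X).symm ⟨ω, y⟩) = orbit G ω.out :=
    fun y => orbit_eq_iff.mpr y.2
  have hpos : (Nat.card (orbit G ω.out) : K) ≠ 0 := Nat.cast_ne_zero.mpr (card_orbit_pos _).ne'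
  simp only [hconst, sum_const, card_univ, ← Nat.card_eq_fintype_card, nsmul_eq_mul]
  field_simp

end MulAction

theorem Fintype.prod_comp_eq_prod_fin_pow_card {Ω M : Type*} [Fintype Ω] [CommMonoid M]
    {l : ℕ} (p : Ω → ℕ) (hp : ∀ ω, p ω ∈ Icc 1 l) (h : ℕ → M) :
    ∏ ω, h (p ω) = ∏ i : Fin l, h (i + 1) ^ #{ω | p ω = i + 1} := by
  rw [Fin.prod_univ_eq_prod_range (fun i : ℕ => h (i + 1) ^ #{ω | p ω = i + 1}),
    ← prod_fiberwise_of_maps_to (g := fun ω => p ω - 1) (t := range l)]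
  · refine Finset.prod_congr rfl fun i _ => ?_
    calc ∏ ω with p ω - 1 = i, h (p ω) = ∏ ω with p ω = i + 1, h (i + 1) := by
          refine Finset.prod_congr (filter_congr fun ω _ => ?_) fun ω hω => ?_
          · have := (mem_Icc.mp (hp ω)).1
            omega
          · rw [(mem_filter.mp hω).2]
      _ = h (i + 1) ^ #{ω | p ω = i + 1} := Finset.prod_const _
  · intro ω _
    have := mem_Icc.mp (hp ω)
    rw [mem_range]
    omega

theorem norm_pow_lt_one {𝕜 : Type*} [NormedDivisionRing 𝕜] {z : 𝕜} (hz : ‖z‖ < 1) {p : ℕ}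
    (hp : p ≠ 0) : ‖z ^ p‖ < 1 := by
  rw [norm_pow]
  exact pow_lt_one₀ (norm_nonneg z) hz hp

namespace Complex

theorem hasSum_ite_dvd_pow_div {z : ℂ} (hz : ‖z‖ < 1) {p : ℕ} (hp : 0 < p) :
    HasSum (fun k : ℕ => if p ∣ k then z ^ k / k else 0) (-log (1 - z ^ p) / p) := by
  have hzp := norm_pow_lt_one hz hp.ne'
  have hinj : Injective (p * ·) := mul_right_injective₀ hp.ne'
  rw [← hinj.hasSum_iff]
  · refine ((hasSum_taylorSeries_neg_log hzp).div_const (p : ℂ)).congr_fun fun m => ?_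
    simp [pow_mul, mul_comm, div_div]
  · rintro k hk
    rw [if_neg]
    rintro ⟨m, rfl⟩
    exact hk ⟨m, rfl⟩

end Complex

namespace Equiv.Perm

variable {X : Type*} [Fintype X]

theorem pow_apply_eq_self_iff_card_orbit_dvd (σ : Perm X) (k : ℕ) (x : X) :
    (σ ^ k) x = x ↔ Nat.card (MulAction.orbit (Subgroup.zpowers σ) x) ∣ k := by
  classical
  rw [Nat.card_eq_fintype_card, ← MulAction.minimalPeriod_eq_card σ x]
  exact MulAction.pow_smul_eq_iff_minimalPeriod_dvd (a := σ)

theorem hasSum_card_fixedPoints_pow_mul_pow_div (σ : Perm X)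
    [Fintype (orbitRel.Quotient (Subgroup.zpowers σ) X)] {z : ℂ} (hz : ‖z‖ < 1) :
    HasSum (fun k : ℕ => (Nat.card {x // (σ ^ k) x = x} : ℂ) * z ^ k / k)
      (∑ ω : orbitRel.Quotient (Subgroup.zpowers σ) X,
        -Complex.log (1 - z ^ Nat.card (orbit (Subgroup.zpowers σ) ω.out))) := by
  classical
  rw [← sum_div_card_orbit fun p => -Complex.log (1 - z ^ p)]
  refine (hasSum_sum fun x _ =>
    Complex.hasSum_ite_dvd_pow_div hz (card_orbit_pos x)).congr_fun fun k => ?_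
  rw [Nat.card_eq_fintype_card, Fintype.card_subtype, card_filter]
  simp_rw [pow_apply_eq_self_iff_card_orbit_dvd]
  push_cast
  simp only [sum_mul, sum_div, boole_mul, ite_div, zero_div]

end Equiv.Perm

/-- for `D ∈ GLₙ(ℤ)` and `d ∈ ℤⁿ`, there are `c₁, …, c_l ∈ ℕ` such that for
`|z| < 1` the series `∑_{k≥1} O(Iₙ - Dᵏ, [∑_{i<k} Dⁱ]d) zᵏ/k` converges and the exponential
of its sum equals `∏ᵢ (1 - zⁱ)^{-cᵢ}`. -/
theorem stmt15 (n : ℕ) (D : Matrix (Fin n) (Fin n) ℤ) (hD : IsUnit D) (d : Fin n → ℤ) :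
    ∃ (l : ℕ) (c : Fin l → ℕ),
      ∀ z : ℂ, ‖z‖ < 1 →
        ∃ s : ℂ,
          HasSum (fun k : ℕ =>
            (solCount (1 - D ^ (k + 1)) ((∑ i ∈ Finset.range (k + 1), D ^ i).mulVec d) : ℂ)
              * z ^ (k + 1) / (k + 1)) s ∧
          Complex.exp s = ∏ i : Fin l, ((1 - z ^ ((i : ℕ) + 1)) ^ (c i))⁻¹ := by
  classical
  have hD₂ : IsUnit (D.map (Int.cast : ℤ → ZMod 2)) :=
    hD.map (Int.castRingHom (ZMod 2)).mapMatrix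
  set σ := affinePerm _ hD₂ fun i => (d i : ZMod 2)
  let len (ω : orbitRel.Quotient (Subgroup.zpowers σ) (Fin n → ZMod 2)) : ℕ :=
    Nat.card (orbit (Subgroup.zpowers σ) ω.out)
  have hlen : ∀ ω, len ω ∈ Icc 1 (Nat.card (Fin n → ZMod 2)) := fun ω =>
    mem_Icc.mpr ⟨card_orbit_pos _, Finite.card_subtype_le _⟩
  refine ⟨Nat.card (Fin n → ZMod 2), fun i => #{ω | len ω = i + 1}, fun z hz =>
    ⟨∑ ω, -Complex.log (1 - z ^ len ω), ?_, ?_⟩⟩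
  · have := (hasSum_nat_add_iff' 1).mpr (σ.hasSum_card_fixedPoints_pow_mul_pow_div hz)
    rw [sum_range_one, Nat.cast_zero, div_zero, sub_zero] at this
    refine this.congr_fun fun k => ?_
    rw [solCount_eq_card_fixedPoints hD₂, Nat.cast_add_one]
  · rw [Complex.exp_sum,
      Fintype.prod_comp_eq_prod_fin_pow_card len hlen
        fun p => Complex.exp (-Complex.log (1 - z ^ p))]
    refine prod_congr rfl fun i _ => ?_
    have hne : 1 - z ^ ((i : ℕ) + 1) ≠ 0 := sub_ne_zero.mpr fun h =>
      (norm_pow_lt_one hz (i : ℕ).succ_ne_zero).ne (by rw [← h, norm_one])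
    rw [Complex.exp_neg, Complex.exp_log hne, inv_pow]
end

section
/- Let k ≥ 2 and m ≥ 1, let Γ₁ = ℤᵏ ⋊ ℤ/2ℤ (with the nontrivial element acting by negation), and let Γ = Γ₁ × ℤᵐ. Then the subgroups Γ₁ × {0} and {1} × ℤᵐ of Γ are characteristic (invariant under every automorphism of Γ); consequently every automorphism φ of Γ decomposes as φ = φ₁ × φ₂ with φ₁ an automorphism of Γ₁ and φ₂ an automorphism of ℤᵐ. -/
open Matrix


/-- Twisted conjugacy relation. -/
def twistedConj {G : Type*} [Group G] (φ : G →* G) (g g' : G) : Prop :=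
  ∃ h : G, g = h * g' * (φ h)⁻¹

/-- Reidemeister number: number of twisted conjugacy classes (0 if infinite). -/
noncomputable def reidemeisterNumber {G : Type*} [Group G] (φ : G →* G) : ℕ :=
  Nat.card (Quot (twistedConj φ))

/-- ℤⁿ written multiplicatively. -/
abbrev Znm (n : ℕ) := Multiplicative (Fin n → ℤ)

/-- The negation automorphism of ℤⁿ. -/
def negAut (n : ℕ) : MulAut (Znm n) := MulEquiv.inv (Znm n)

/-- The action of ℤ/2ℤ on ℤⁿ where the nontrivial element acts by negation. -/
def negAct (n : ℕ) : Multiplicative (ZMod 2) →* MulAut (Znm n) :=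
  MonoidHom.mk' (fun a => negAut n ^ (a.toAdd).val) (by
    have key : negAut n * negAut n = 1 := by
      ext x
      simp [negAut]
    have h2 : ∀ x : ZMod 2, x = 0 ∨ x = 1 := by decide
    intro a b
    rcases h2 a.toAdd with ha | ha <;> rcases h2 b.toAdd with hb | hb <;>
      simp only [toAdd_mul, ha, hb] <;>
      norm_num [show (ZMod.val (2 : ZMod 2)) = 0 from rfl, show (ZMod.val (1 : ZMod 2)) = 1 from rfl,
        show (ZMod.val (0 : ZMod 2)) = 0 from rfl, show ((0+1 : ZMod 2)).val = 1 from rfl,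
        show ((1+0 : ZMod 2)).val = 1 from rfl, pow_succ, key])

/-- The crystallographic group ℤⁿ ⋊ ℤ/2ℤ. -/
abbrev Gamma (n : ℕ) := SemidirectProduct (Znm n) (Multiplicative (ZMod 2)) (negAct n)

lemma negAct_sigma (n : ℕ) (v : Znm n) :
    negAct n (Multiplicative.ofAdd 1) v = v⁻¹ := by
  show (negAut n ^ (ZMod.val (1 : ZMod 2))) v = v⁻¹
  norm_num [show ZMod.val (1 : ZMod 2) = 1 from rfl, negAut]

lemma zmod2_cases (x : Multiplicative (ZMod 2)) : x = 1 ∨ x = Multiplicative.ofAdd 1 := by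
  have hall : ∀ y : ZMod 2, y = 0 ∨ y = 1 := by decide
  rcases hall x.toAdd with h | h
  · left; exact Multiplicative.toAdd.injective h
  · right; exact Multiplicative.toAdd.injective h

lemma znm_torsionfree {n : ℕ} {a : Multiplicative (Fin n → ℤ)} (h : IsOfFinOrder a) : a = 1 := by
  obtain ⟨c, hc, hpow⟩ := isOfFinOrder_iff_pow_eq_one.mp h
  have hsm : c • a.toAdd = 0 := by
    have := congrArg Multiplicative.toAdd hpow
    simpa using this
  have ha : a.toAdd = 0 := by
    funext i
    have := congrFun hsm i
    simp only [Pi.smul_apply, nsmul_eq_mul, Pi.zero_apply] at this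
    rcases mul_eq_zero.mp this with h' | h'
    · exact absurd (by exact_mod_cast h') hc.ne'
    · exact h'
  exact Multiplicative.toAdd.injective ha

lemma gamma_sq_eq_one {n : ℕ} (g : Gamma n) (h : g.right = Multiplicative.ofAdd 1) :
    g * g = 1 := by
  have hl : (g * g).left = 1 := by
    rw [SemidirectProduct.mul_left, h, negAct_sigma, mul_inv_cancel]
  apply SemidirectProduct.ext
  · simpa using hl
  · rw [SemidirectProduct.mul_right, h]
    simp only [SemidirectProduct.one_right]
    exact Multiplicative.toAdd.injective (by decide)

lemma gamma_sq_torsion {n : ℕ} (g : Gamma n) (h : g.right = Multiplicative.ofAdd 1) :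
    IsOfFinOrder g :=
  isOfFinOrder_iff_pow_eq_one.mpr ⟨2, by norm_num, by rw [pow_two]; exact gamma_sq_eq_one g h⟩

lemma center_gamma (k : ℕ) (hk : 1 ≤ k) : Subgroup.center (Gamma k) = ⊥ := by
  ext g
  rw [Subgroup.mem_center_iff, Subgroup.mem_bot]
  constructor
  · intro h
    have hr : g.right = 1 := by
      rcases zmod2_cases g.right with h1 | h1
      · exact h1
      · exfalso
        set w : Znm k := Multiplicative.ofAdd (Pi.single ⟨0, hk⟩ 1) with hw
        have ht := h ⟨w, 1⟩
        have hleft := congrArg SemidirectProduct.left ht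
        simp only [SemidirectProduct.mul_left, _root_.map_one, MulAut.one_apply, h1,
          negAct_sigma] at hleft
        have h2 : w = w⁻¹ := by
          apply mul_left_cancel (a := g.left)
          rw [mul_comm g.left w]; exact hleft
        have := congrFun (congrArg Multiplicative.toAdd h2) ⟨0, hk⟩
        simp [hw, Pi.single_apply] at this
    have hl : g.left = 1 := by
      have ht := h ⟨1, Multiplicative.ofAdd 1⟩
      have hle := congrArg SemidirectProduct.left ht
      simp only [SemidirectProduct.mul_left, negAct_sigma, one_mul, hr, _root_.map_one,
        MulAut.one_apply, mul_one] at hle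
      have h2 : g.left * g.left = 1 := by
        nth_rewrite 1 [← hle]; exact inv_mul_cancel _
      exact znm_torsionfree (isOfFinOrder_iff_pow_eq_one.mpr
        ⟨2, by norm_num, by rw [pow_two]; exact h2⟩)
    exact SemidirectProduct.ext hl hr
  · rintro rfl
    intro b; group

/-- in `Γ = (ℤᵏ ⋊ ℤ/2ℤ) × ℤᵐ` (`k ≥ 2`, `m ≥ 1`), the factors `Γ₁ × {0}` and
`{1} × ℤᵐ` are characteristic subgroups, and consequently every automorphism of `Γ` splits
as a product `φ₁ × φ₂` of automorphisms of the factors. -/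
theorem stmt17 (k m : ℕ) (hk : 2 ≤ k) (hm : 1 ≤ m) :
    Subgroup.Characteristic
      ((⊤ : Subgroup (Gamma k)).prod (⊥ : Subgroup (Multiplicative (Fin m → ℤ)))) ∧
    Subgroup.Characteristic
      ((⊥ : Subgroup (Gamma k)).prod (⊤ : Subgroup (Multiplicative (Fin m → ℤ)))) ∧
    ∀ φ : (Gamma k × Multiplicative (Fin m → ℤ)) ≃* (Gamma k × Multiplicative (Fin m → ℤ)),
      ∃ (φ₁ : Gamma k ≃* Gamma k)
        (φ₂ : Multiplicative (Fin m → ℤ) ≃* Multiplicative (Fin m → ℤ)),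
        ∀ g : Gamma k × Multiplicative (Fin m → ℤ), φ g = (φ₁ g.1, φ₂ g.2) := by
  set M := Multiplicative (Fin m → ℤ)
  -- Γ₁ × 0 is the subgroup generated by torsion elements
  have hclos : Subgroup.closure {x : Gamma k × M | IsOfFinOrder x}
      = (⊤ : Subgroup (Gamma k)).prod ⊥ := by
    apply le_antisymm
    · rw [Subgroup.closure_le]
      intro x hx
      simp only [Set.mem_setOf_eq] at hx
      refine Subgroup.mem_prod.mpr ⟨trivial, ?_⟩
      rw [Subgroup.mem_bot]
      exact znm_torsionfree hx.snd
    · rintro ⟨g, a⟩ hx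
      have ha : a = 1 := by
        simpa [Subgroup.mem_prod, Subgroup.mem_bot] using hx
      subst ha
      have hone : IsOfFinOrder (1 : M) := IsOfFinOrder.one
      rcases zmod2_cases g.right with h1 | h1
      · set s : Gamma k := ⟨1, Multiplicative.ofAdd 1⟩ with hs
        have hgs : (g * s).right = Multiplicative.ofAdd 1 := by
          rw [SemidirectProduct.mul_right, h1, one_mul]
        have hsplit : ((g, (1:M)) : Gamma k × M) = (g * s, (1:M)) * (s, 1) := by
          rw [Prod.mk_mul_mk, mul_one]
          congr 1
          rw [mul_assoc, gamma_sq_eq_one s rfl, mul_one]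
        rw [hsplit]
        exact mul_mem
          (Subgroup.subset_closure ((gamma_sq_torsion _ hgs).prod_mk hone))
          (Subgroup.subset_closure ((gamma_sq_torsion s rfl).prod_mk hone))
      · exact Subgroup.subset_closure ((gamma_sq_torsion g h1).prod_mk hone)
  have hchar1 : Subgroup.Characteristic
      ((⊤ : Subgroup (Gamma k)).prod (⊥ : Subgroup M)) := by
    rw [← hclos]
    refine Subgroup.characteristic_iff_map_eq.mpr fun ψ => ?_
    rw [MonoidHom.map_closure]
    congr 1
    ext x
    simp only [Set.mem_image, Set.mem_setOf_eq]
    constructor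
    · rintro ⟨y, hy, rfl⟩
      exact ψ.toMonoidHom.isOfFinOrder hy
    · intro hxf
      exact ⟨ψ.symm x, ψ.symm.toMonoidHom.isOfFinOrder hxf, ψ.apply_symm_apply x⟩
  -- 1 × ℤᵐ is the center
  have hcenter : Subgroup.center (Gamma k × M)
      = (⊥ : Subgroup (Gamma k)).prod (⊤ : Subgroup M) := by
    ext x
    obtain ⟨g, a⟩ := x
    rw [Subgroup.mem_center_iff]
    simp only [Subgroup.mem_prod, Subgroup.mem_bot, Subgroup.mem_top, and_true]
    constructor
    · intro h
      have hg : g ∈ Subgroup.center (Gamma k) := by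
        rw [Subgroup.mem_center_iff]
        intro b
        have := congrArg Prod.fst (h (b, 1))
        simpa using this
      rw [center_gamma k (by omega), Subgroup.mem_bot] at hg
      exact hg
    · rintro rfl p
      obtain ⟨p1, p2⟩ := p
      rw [Prod.mk_mul_mk, Prod.mk_mul_mk, one_mul, mul_one, mul_comm]
  have hchar2 : Subgroup.Characteristic
      ((⊥ : Subgroup (Gamma k)).prod (⊤ : Subgroup M)) :=
    hcenter ▸ Subgroup.centerCharacteristic
  refine ⟨hchar1, hchar2, fun φ => ?_⟩
  -- splitting of automorphisms
  have key : ∀ (ψ : (Gamma k × M) ≃* (Gamma k × M)),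
      (∀ g : Gamma k, (ψ (g, 1)).2 = 1) ∧ (∀ a : M, (ψ (1, a)).1 = 1) := by
    intro ψ
    constructor
    · intro g
      have hmem : ((g, (1:M)) : Gamma k × M) ∈ (⊤ : Subgroup (Gamma k)).prod ⊥ := by
        simp [Subgroup.mem_prod, Subgroup.mem_bot]
      have := (Subgroup.characteristic_iff_map_le.mp hchar1 ψ) ⟨(g, 1), hmem, rfl⟩
      rw [Subgroup.mem_prod, Subgroup.mem_bot] at this
      exact this.2
    · intro a
      have hmem : (((1:Gamma k), a) : Gamma k × M) ∈ (⊥ : Subgroup (Gamma k)).prod ⊤ := by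
        simp [Subgroup.mem_prod, Subgroup.mem_bot]
      have := (Subgroup.characteristic_iff_map_le.mp hchar2 ψ) ⟨(1, a), hmem, rfl⟩
      rw [Subgroup.mem_prod, Subgroup.mem_bot] at this
      exact this.1
  obtain ⟨hA, hB⟩ := key φ
  obtain ⟨hA', hB'⟩ := key φ.symm
  refine ⟨⟨⟨fun g => (φ (g, 1)).1, fun g => (φ.symm (g, 1)).1, ?_, ?_⟩, ?_⟩,
    ⟨⟨fun a => (φ (1, a)).2, fun a => (φ.symm (1, a)).2, ?_, ?_⟩, ?_⟩, ?_⟩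
  · intro g
    have h1 : ((φ (g, 1)).1, (1:M)) = φ (g, 1) := Prod.ext rfl (hA g).symm
    show (φ.symm ((φ (g, 1)).1, 1)).1 = g
    rw [h1, MulEquiv.symm_apply_apply]
  · intro g
    have h1 : ((φ.symm (g, 1)).1, (1:M)) = φ.symm (g, 1) := Prod.ext rfl (hA' g).symm
    show (φ ((φ.symm (g, 1)).1, 1)).1 = g
    rw [h1, MulEquiv.apply_symm_apply]
  · intro g h
    show (φ (g * h, 1)).1 = (φ (g, 1)).1 * (φ (h, 1)).1
    have : ((g * h, (1:M)) : Gamma k × M) = (g, 1) * (h, 1) := by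
      rw [Prod.mk_mul_mk, mul_one]
    rw [this, _root_.map_mul, Prod.fst_mul]
  · intro a
    have h1 : ((1:Gamma k), (φ (1, a)).2) = φ (1, a) := Prod.ext (hB a).symm rfl
    show (φ.symm (1, (φ (1, a)).2)).2 = a
    rw [h1, MulEquiv.symm_apply_apply]
  · intro a
    have h1 : ((1:Gamma k), (φ.symm (1, a)).2) = φ.symm (1, a) := Prod.ext (hB' a).symm rfl
    show (φ (1, (φ.symm (1, a)).2)).2 = a
    rw [h1, MulEquiv.apply_symm_apply]
  · intro a b
    show (φ (1, a * b)).2 = (φ (1, a)).2 * (φ (1, b)).2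
    have : (((1:Gamma k), a * b) : Gamma k × M) = (1, a) * (1, b) := by
      rw [Prod.mk_mul_mk, mul_one]
    rw [this, _root_.map_mul, Prod.snd_mul]
  · intro g
    obtain ⟨g1, g2⟩ := g
    have hsplit : ((g1, g2) : Gamma k × M) = (g1, 1) * (1, g2) := by
      rw [Prod.mk_mul_mk, mul_one, one_mul]
    have hval : φ (g1, g2) = ((φ (g1, 1)).1, (φ (1, g2)).2) := by
      conv_lhs => rw [hsplit]
      rw [_root_.map_mul]
      refine Prod.ext ?_ ?_
      · show (φ (g1, 1)).1 * (φ (1, g2)).1 = (φ (g1, 1)).1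
        rw [hB g2, mul_one]
      · show (φ (g1, 1)).2 * (φ (1, g2)).2 = (φ (1, g2)).2
        rw [hA g1, one_mul]
    exact hval
end
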